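/- arXiv:math/9811174 — 3 statements merged into one kernel-verified Lean document; each statement's English description precedes it below -/
import Mathlib

section
/- Define a sequence of polynomials P_n(θ) recursively by P_0(θ) = 1 and P_n(θ) = ∫_0^1 ( ∫_θ^ψ P_{n-1}(t) dt ) dψ. Then for all n ≥ 0, P_n(θ) = (1/n!) B̂_n(-θ), where B̂_n(x) = Σ_{k=0}^n binom(n,k) (-1)^{n-k} B_{n-k} x^k. -/
/-!
Up to the factor `(-1)^n / n!`, the `P_n` are the Bernoulli polynomials: `B_{k+1} / (k+1)` is an
antiderivative of `B_k`, so the inner integral is `(B_{k+1}(ψ) - B_{k+1}(θ)) / (k+1)`, and the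
outer one kills the `ψ`-term because `∫_0^1 B_m = 0` for `m ≥ 1`. Finally `B̂_n(-θ) = (-1)^n B_n(θ)`.
-/

open Nat Finset intervalIntegral

lemma integral_bernoulliFun_eq_sub_div (k : ℕ) (a b : ℝ) :
    ∫ t in a..b, bernoulliFun k t =
      (bernoulliFun (k + 1) b - bernoulliFun (k + 1) a) / (k + 1) := by
  rw [integral_eq_sub_of_hasDerivAt (fun x _ => antideriv_bernoulliFun k x)
    (intervalIntegrable_bernoulliFun k a b), sub_div]

lemma integral_integral_bernoulliFun (k : ℕ) (θ : ℝ) :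
    ∫ ψ in (0:ℝ)..1, ∫ t in θ..ψ, bernoulliFun k t = -bernoulliFun (k + 1) θ / (k + 1) := by
  simp_rw [integral_bernoulliFun_eq_sub_div, intervalIntegral.integral_div,
    integral_sub (intervalIntegrable_bernoulliFun _ 0 1) intervalIntegrable_const,
    integral_bernoulliFun_eq_zero (succ_ne_zero k)]
  simp

lemma integral_integral_scaled_bernoulliFun (n : ℕ) (θ : ℝ) :
    ∫ ψ in (0:ℝ)..1, ∫ t in θ..ψ, (-1) ^ n / (n ! : ℝ) * bernoulliFun n t =
      (-1) ^ (n + 1) / ((n + 1)! : ℝ) * bernoulliFun (n + 1) θ := by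
  simp_rw [integral_const_mul, integral_integral_bernoulliFun, factorial_succ]
  push_cast
  field_simp
  ring

lemma sum_choose_neg_one_pow_bernoulli_mul_neg_pow (n : ℕ) (x : ℝ) :
    ∑ k ∈ range (n + 1),
        (n.choose k : ℝ) * ((-1) ^ (n - k) * ((bernoulli (n - k) : ℚ) : ℝ)) * (-x) ^ k =
      (-1) ^ n * bernoulliFun n x := by
  simp only [bernoulliFun, Polynomial.bernoulli_def, Polynomial.eval_finsetSum,
    Polynomial.map_sum, Polynomial.map_monomial, Polynomial.eval_monomial, mul_sum]
  refine sum_congr rfl fun k hk => ?_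
  have hsign : (-1 : ℝ) ^ (n - k) * (-1) ^ k = (-1) ^ n := by
    rw [← pow_add, Nat.sub_add_cancel (mem_range_succ_iff.mp hk)]
  simp only [neg_pow x, eq_ratCast, Rat.cast_mul, Rat.cast_natCast]
  linear_combination (n.choose k : ℝ) * ((bernoulli (n - k) : ℚ) : ℝ) * x ^ k * hsign

/-- If `P_0(θ) = 1` and `P_n(θ) = ∫_0^1 (∫_θ^ψ P_{n-1}(t) dt) dψ`, then
`P_n(θ) = (1/n!) B̂_n(-θ)` where `B̂_n(x) = ∑_{k=0}^n binom(n,k) (-1)^{n-k} B_{n-k} x^k`. -/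
theorem kontsevich_weight_polynomials (P : ℕ → ℝ → ℝ)
    (h0 : ∀ θ : ℝ, P 0 θ = 1)
    (hrec : ∀ (n : ℕ) (θ : ℝ),
      P (n + 1) θ = ∫ ψ in (0:ℝ)..1, ∫ t in θ..ψ, P n t) :
    ∀ (n : ℕ) (θ : ℝ),
      P n θ = (1 / (n ! : ℝ)) *
        ∑ k ∈ Finset.range (n + 1),
          (n.choose k : ℝ) * ((-1) ^ (n - k) * ((bernoulli (n - k) : ℚ) : ℝ)) * (-θ) ^ k := by
  have hP : ∀ n θ, P n θ = (-1) ^ n / (n ! : ℝ) * bernoulliFun n θ := by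
    intro n
    induction n with
    | zero => simp [h0]
    | succ n ih =>
      intro θ
      simp_rw [hrec n θ, ih, integral_integral_scaled_bernoulliFun]
  intro n θ
  rw [hP, sum_choose_neg_one_pow_bernoulli_mul_neg_pow]
  ring
end

section
/- Let g be a Lie algebra, σ: S(g) → U(g) the symmetrization map, X, Y ∈ g, n ∈ ℕ. Then in U(g): X^{∘n} ∘ Y = Σ_{k=0}^{n} (n! B̂_k)/(k!(n-k)!) · σ( (X)^{n-k} · (ad_X)^k(Y) ), where B̂_k = (-1)^k B_k are the modified Bernoulli numbers. -/
open Nat Finset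

noncomputable section

/-- The symmetrization relation on the tensor algebra: `x ⊗ y ~ y ⊗ x`. -/
def symRel (k : Type*) [CommRing k] (L : Type*) [AddCommGroup L] [Module k L]
    (a b : TensorAlgebra k L) : Prop :=
  ∃ x y : L, a = TensorAlgebra.ι k x * TensorAlgebra.ι k y ∧
    b = TensorAlgebra.ι k y * TensorAlgebra.ι k x

/-- The symmetric algebra `S(g)`, as a quotient of the tensor algebra. -/
abbrev SymmAlg (k : Type*) [CommRing k] (L : Type*) [AddCommGroup L] [Module k L] :=
  RingQuot (symRel k L)

/-- The canonical inclusion `g → S(g)`. -/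
def ιSym (k : Type*) [CommRing k] (L : Type*) [AddCommGroup L] [Module k L] (x : L) :
    SymmAlg k L :=
  RingQuot.mkAlgHom k (symRel k L) (TensorAlgebra.ι k x)

/-- The canonical inclusion `g → U(g)`. -/
def ιUE (k : Type*) [CommRing k] (L : Type*) [LieRing L] [LieAlgebra k L] (x : L) :
    UniversalEnvelopingAlgebra k L :=
  UniversalEnvelopingAlgebra.ι k x

/-! Write `u = X` in `U(g)`. Left multiplication by `u` splits as `R_u + ad_u` with `R_u` right
multiplication, and these two operators commute, so the binomial theorem gives
`u^n Y = ∑ᵢ C(n,i) (ad_u^i Y) u^(n-i)`. On the other side, `σ(X^m z)` is the average of the `m + 1`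
words `u^i z u^(m-i)`, which the same expansion turns into
`(m+1)⁻¹ ∑ₜ C(m+1,t+1) (ad_u^t z) u^(m-t)`. Comparing the coefficients of `(ad_u^i Y) u^(n-i)`
reduces the theorem to `∑_{j ≤ r} C(r+1,j) B̂_j = r + 1`, the recursion defining the modified
Bernoulli numbers `B̂_j = bernoulli' j`. -/

theorem List.prod_ofFn_update_const {M : Type*} [Monoid M] {m : ℕ} (a b : M) (i : Fin (m + 1)) :
    (List.ofFn (Function.update (fun _ => a) i b)).prod = a ^ (i : ℕ) * b * a ^ (m - i) := by
  have hset :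
      List.ofFn (Function.update (fun _ => a) i b) = (List.replicate (m + 1) a).set i b := by
    refine List.ext_getElem (by simp) fun j h₁ h₂ => ?_
    rw [List.getElem_ofFn, List.getElem_set, List.getElem_replicate, Function.update_apply]
    simp only [Fin.ext_iff, eq_comm]
  rw [hset, List.prod_set]
  simp [List.take_replicate, List.drop_replicate, i.is_lt]

theorem Equiv.Perm.sum_apply_eq_factorial_smul_sum {M : Type*} [AddCommMonoid M] {m : ℕ}
    (G : Fin (m + 1) → M) (i : Fin (m + 1)) :
    ∑ π : Equiv.Perm (Fin (m + 1)), G (π i) = m ! • ∑ j, G j := by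
  -- `decomposeFin` splits a permutation of `Fin (m + 1)` into its value at `0` and the rest.
  have hzero :
      ∑ π : Equiv.Perm (Fin (m + 1)), G (π i) = ∑ π : Equiv.Perm (Fin (m + 1)), G (π 0) :=
    Fintype.sum_equiv (Equiv.mulRight (Equiv.swap i 0)) _ _ fun π => by simp
  rw [hzero, ← Equiv.sum_comp Equiv.Perm.decomposeFin.symm]
  simp [Fintype.sum_prod_type, Equiv.Perm.decomposeFin_symm_apply_zero, Fintype.card_perm,
    smul_sum]

theorem choose_div_mul_choose_eq {K : Type*} [Field K] [CharZero K] {n r j : ℕ}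
    (hjr : j ≤ r) (hrn : r ≤ n) :
    (n.choose j : K) / ((n - j : ℕ) + 1) * (n - j + 1).choose (r - j + 1)
      = n.choose r / (r + 1) * (r + 1).choose j := by
  rw [Nat.cast_choose K (by omega : j ≤ n), Nat.cast_choose K hrn,
    Nat.cast_choose K (by omega : r - j + 1 ≤ n - j + 1), Nat.cast_choose K (by omega : j ≤ r + 1),
    show n - j + 1 - (r - j + 1) = n - r by omega, show r + 1 - j = r - j + 1 by omega]
  have : ((n - j)! : K) ≠ 0 := Nat.cast_ne_zero.mpr (Nat.factorial_ne_zero _)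
  have : (r ! : K) ≠ 0 := Nat.cast_ne_zero.mpr (Nat.factorial_ne_zero _)
  simp only [Nat.factorial_succ]
  push_cast
  field_simp

theorem sum_choose_mul_bernoulli'_div_mul_choose {n r : ℕ} (hrn : r ≤ n) :
    ∑ j ∈ range (r + 1),
        n.choose j * bernoulli' j / ((n - j : ℕ) + 1) * (n - j + 1).choose (r - j + 1)
      = (n.choose r : ℚ) := by
  calc _ = ∑ j ∈ range (r + 1), n.choose r / (r + 1) * ((r + 1).choose j * bernoulli' j) := by
        refine sum_congr rfl fun j hj => ?_
        rw [← mul_assoc, ← choose_div_mul_choose_eq (by simpa [Nat.lt_succ_iff] using hj) hrn]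
        ring
    _ = n.choose r := by
        rw [← mul_sum, sum_bernoulli']
        push_cast
        field_simp

theorem sum_bernoulli'_smul_sum_choose_smul {k M : Type*} [Field k] [CharZero k]
    [AddCommMonoid M] [Module k M] (n : ℕ) (T : ℕ → M) :
    ∑ j ∈ range (n + 1), ((n.choose j * bernoulli' j : ℚ) : k) • (((n - j : ℕ) : k) + 1)⁻¹ •
        ∑ t ∈ range (n - j + 1), (n - j + 1).choose (t + 1) • T (j + t)
      = ∑ i ∈ range (n + 1), n.choose i • T i := by
  have hinner : ∀ j ∈ range (n + 1),
      ((n.choose j * bernoulli' j : ℚ) : k) • (((n - j : ℕ) : k) + 1)⁻¹ •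
        ∑ t ∈ range (n - j + 1), (n - j + 1).choose (t + 1) • T (j + t)
      = ∑ i ∈ Ico j (n + 1), ((n.choose j * bernoulli' j / ((n - j : ℕ) + 1)
          * (n - j + 1).choose (i - j + 1) : ℚ) : k) • T i := by
    intro j hj
    have hnj : n + 1 - j = n - j + 1 := by rw [mem_range] at hj; omega
    rw [sum_Ico_eq_sum_range, hnj, smul_sum, smul_sum]
    refine sum_congr rfl fun t _ => ?_
    rw [Nat.add_sub_cancel_left, ← Nat.cast_smul_eq_nsmul k, smul_smul, smul_smul]
    push_cast
    congr 1
    ring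
  rw [sum_congr rfl hinner, range_eq_Ico, sum_Ico_Ico_comm]
  refine sum_congr rfl fun i hi => ?_
  rw [← sum_smul, ← Rat.cast_sum, ← range_eq_Ico,
    sum_choose_mul_bernoulli'_div_mul_choose (by rw [mem_Ico] at hi; omega), Rat.cast_natCast,
    Nat.cast_smul_eq_nsmul]

theorem pow_mul_eq_sum_choose_smul_iterate_lie_mul {A : Type*} [Ring A] (u v : A) (m : ℕ) :
    u ^ m * v = ∑ t ∈ range (m + 1), m.choose t • ((fun w => ⁅u, w⁆)^[t] v * u ^ (m - t)) := by
  set D := LinearMap.mulLeft ℤ u - LinearMap.mulRight ℤ u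
  have hD : ⇑D = fun w => ⁅u, w⁆ := by ext w; simp [D, Ring.lie_def]
  have hcomm : Commute D (LinearMap.mulRight ℤ u) :=
    (LinearMap.commute_mulLeft_right u u).sub_left (Commute.refl _)
  have := congr($(hcomm.add_pow' m) v)
  rw [sub_add_cancel, LinearMap.pow_mulLeft, Nat.sum_antidiagonal_eq_sum_range_succ
    (fun a b => m.choose a • (D ^ a * LinearMap.mulRight ℤ u ^ b))] at this
  simp only [(hcomm.pow_pow _ _).eq] at this
  simpa [LinearMap.pow_mulRight, Module.End.pow_apply, hD] using this

theorem sum_pow_mul_mul_pow_eq_sum_choose_smul {A : Type*} [Ring A] (u v : A) (m : ℕ) :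
    ∑ i ∈ range (m + 1), u ^ i * v * u ^ (m - i)
      = ∑ t ∈ range (m + 1), (m + 1).choose (t + 1) • ((fun w => ⁅u, w⁆)^[t] v * u ^ (m - t)) := by
  have hexpand : ∀ i ∈ range (m + 1), u ^ i * v * u ^ (m - i)
      = ∑ t ∈ Ico 0 (i + 1), i.choose t • ((fun w => ⁅u, w⁆)^[t] v * u ^ (m - t)) := by
    intro i hi
    rw [pow_mul_eq_sum_choose_smul_iterate_lie_mul, sum_mul, range_eq_Ico]
    refine sum_congr rfl fun t ht => ?_
    rw [smul_mul_assoc, mul_assoc, ← pow_add]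
    congr 3
    simp only [mem_Ico, mem_range] at hi ht
    omega
  rw [sum_congr rfl hexpand, range_eq_Ico, ← sum_Ico_Ico_comm]
  refine sum_congr rfl fun t _ => ?_
  rw [← sum_smul, Ico_add_one_right_eq_Icc, Nat.sum_Icc_choose]

theorem symmetrization_ιSym_pow_mul {k : Type*} [Field k] [CharZero k] {L : Type*} [LieRing L]
    [LieAlgebra k L] (σ : SymmAlg k L → UniversalEnvelopingAlgebra k L)
    (hσ : ∀ (n : ℕ) (f : Fin n → L),
      σ ((List.ofFn fun m => ιSym k L (f m)).prod)
        = ((n ! : k)⁻¹) •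
            ∑ π : Equiv.Perm (Fin n), (List.ofFn fun m => ιUE k L (f (π m))).prod)
    (X z : L) (m : ℕ) :
    σ (ιSym k L X ^ m * ιSym k L z)
      = ((m : k) + 1)⁻¹ • ∑ i ∈ range (m + 1), ιUE k L X ^ i * ιUE k L z * ιUE k L X ^ (m - i) := by
  set f : Fin (m + 1) → L := Function.update (fun _ => X) (Fin.last m) z
  set G : Fin (m + 1) → UniversalEnvelopingAlgebra k L :=
    fun i => ιUE k L X ^ (i : ℕ) * ιUE k L z * ιUE k L X ^ (m - i)
  have hsym : ιSym k L X ^ m * ιSym k L z = (List.ofFn fun i => ιSym k L (f i)).prod := by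
    have hupd : (fun i => ιSym k L (f i))
        = Function.update (fun _ => ιSym k L X) (Fin.last m) (ιSym k L z) := by
      funext i
      simp only [f, Function.update_apply]
      split_ifs <;> rfl
    rw [hupd, List.prod_ofFn_update_const]
    simp
  have hperm (π : Equiv.Perm (Fin (m + 1))) :
      (List.ofFn fun i => ιUE k L (f (π i))).prod = G (π.symm (Fin.last m)) := by
    have hupd : (fun i => ιUE k L (f (π i)))
        = Function.update (fun _ => ιUE k L X) (π.symm (Fin.last m)) (ιUE k L z) := by
      funext i
      simp only [f, Function.update_apply, Equiv.eq_symm_apply]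
      split_ifs <;> rfl
    exact hupd ▸ List.prod_ofFn_update_const _ _ _
  have hinv : ∑ π : Equiv.Perm (Fin (m + 1)), G (π.symm (Fin.last m))
      = ∑ π : Equiv.Perm (Fin (m + 1)), G (π (Fin.last m)) :=
    Fintype.sum_equiv (Equiv.inv _) _ _ fun _ => rfl
  rw [hsym, hσ, Fintype.sum_congr _ _ hperm, hinv, Equiv.Perm.sum_apply_eq_factorial_smul_sum,
    Fin.sum_univ_eq_sum_range (fun i => ιUE k L X ^ i * ιUE k L z * ιUE k L X ^ (m - i)),
    ← Nat.cast_smul_eq_nsmul k, smul_smul]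
  have hfact : (m ! : k) ≠ 0 := Nat.cast_ne_zero.mpr m.factorial_ne_zero
  rw [Nat.factorial_succ]
  push_cast
  field_simp

theorem ιUE_iterate_lie {k : Type*} [CommRing k] {L : Type*} [LieRing L] [LieAlgebra k L]
    (X Y : L) (t : ℕ) :
    ιUE k L ((fun z => ⁅X, z⁆)^[t] Y) = (fun w => ⁅ιUE k L X, w⁆)^[t] (ιUE k L Y) :=
  Function.Semiconj.iterate_right (fun z => by simp [ιUE]) t Y

/-- In `U(g)`: `X^{∘n} ∘ Y = ∑_{k=0}^{n} (n! B̂_k)/(k!(n-k)!) σ((X)^{n-k} · (ad_X)^k(Y))`,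
where `σ` is the symmetrization map and `B̂_k = (-1)^k B_k` are the modified
Bernoulli numbers. -/
theorem pow_mul_eq_sum_modified_bernoulli_symmetrization
    (k : Type*) [Field k] [CharZero k] (L : Type*) [LieRing L] [LieAlgebra k L]
    (σ : SymmAlg k L ≃ₗ[k] UniversalEnvelopingAlgebra k L)
    (hσ : ∀ (n : ℕ) (f : Fin n → L),
      σ ((List.ofFn fun m => ιSym k L (f m)).prod)
        = ((n ! : k)⁻¹) •
            ∑ π : Equiv.Perm (Fin n), (List.ofFn fun m => ιUE k L (f (π m))).prod)
    (X Y : L) (n : ℕ) :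
    (ιUE k L X) ^ n * ιUE k L Y
      = ∑ j ∈ Finset.range (n + 1),
          ((((n ! : ℚ) * ((-1) ^ j * bernoulli j)) / ((j ! : ℚ) * ((n - j)! : ℚ)) : ℚ) : k) •
            σ ((ιSym k L X) ^ (n - j) * ιSym k L ((fun z => ⁅X, z⁆)^[j] Y)) := by
  set T : ℕ → UniversalEnvelopingAlgebra k L :=
    fun i => ιUE k L ((fun z => ⁅X, z⁆)^[i] Y) * ιUE k L X ^ (n - i)
  have hterm : ∀ j ∈ range (n + 1),
      ((((n ! : ℚ) * ((-1) ^ j * bernoulli j)) / ((j ! : ℚ) * ((n - j)! : ℚ)) : ℚ) : k) •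
          σ ((ιSym k L X) ^ (n - j) * ιSym k L ((fun z => ⁅X, z⁆)^[j] Y))
        = ((n.choose j * bernoulli' j : ℚ) : k) • (((n - j : ℕ) : k) + 1)⁻¹ •
            ∑ t ∈ range (n - j + 1), (n - j + 1).choose (t + 1) • T (j + t) := by
    intro j hj
    have hjn : j ≤ n := Nat.lt_succ_iff.mp (mem_range.mp hj)
    have hT (t : ℕ) : (fun w => ⁅ιUE k L X, w⁆)^[t] (ιUE k L ((fun z => ⁅X, z⁆)^[j] Y))
        * ιUE k L X ^ (n - j - t) = T (j + t) := by
      rw [← ιUE_iterate_lie, ← Function.iterate_add_apply, add_comm, Nat.sub_sub]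
    rw [bernoulli'_eq_bernoulli, Nat.cast_choose ℚ hjn, ← mul_div_right_comm,
      symmetrization_ιSym_pow_mul σ hσ, sum_pow_mul_mul_pow_eq_sum_choose_smul]
    simp only [hT]
  rw [sum_congr rfl hterm, sum_bernoulli'_smul_sum_choose_smul,
    pow_mul_eq_sum_choose_smul_iterate_lie_mul]
  simp only [T, ιUE_iterate_lie]

end
end

section
/- A formal bi-differential star product ⋆ on polynomials S(g) over the dual of a Lie algebra g, satisfying: (i) for homogeneous p of degree n and q of degree m, p ⋆ q - pq is a polynomial of degree at most n+m-1, and (ii) associativity, is uniquely determined by the values (X)^n ⋆ Y for all X, Y ∈ g and n ∈ ℕ. -/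
/-!
Induct on the order `n`. If `Π₁ⱼ = Π₂ⱼ` for `j < n`, the lower-order terms cancel between the two
associativity equations at order `n`, so `D = Π₁ₙ - Π₂ₙ` is a Hochschild 2-cocycle of the
polynomial algebra. The degree condition gives `D(1, 1) = 0`, hence `D(p, 1) = 0`. The powers `Xᵐ`
of linear forms span the polynomials (polarization: `m! x₁ ⋯ xₘ` is an alternating sum of the
`(∑_{k ∈ S} xₖ)ᵐ`), so the hypothesis gives `D(p, Y) = 0` for linear `Y`, and the cocycle identity
`D(p, qY) = D(pq, Y) + D(p, q) Y - p D(q, Y)` propagates this to all second arguments.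
-/

open Finset MvPolynomial

theorem Finset.sum_superset_neg_one_pow_card_compl {α : Type*} [Fintype α] [DecidableEq α]
    (B : Finset α) : ∑ S with B ⊆ S, (-1 : ℤ) ^ #Sᶜ = if B = univ then 1 else 0 := by
  have h := sum_powerset_neg_one_pow_card (x := Bᶜ)
  simp only [compl_eq_empty_iff] at h
  rw [← h]
  exact sum_nbij' compl compl (by simp)
    (fun T hT => by simpa [subset_compl_comm] using hT) (by simp) (by simp) (by simp)

theorem sum_surjective_prod_comp {α M : Type*} [Fintype α] [DecidableEq α] [CommSemiring M]
    (v : α → M) :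
    ∑ f : α → α with univ.image f = univ, ∏ i, v (f i)
      = (Fintype.card α).factorial • ∏ i, v i := by
  have hbij : ∀ f : α → α, univ.image f = univ ↔ Function.Bijective f := by
    intro f
    rw [← Finite.surjective_iff_bijective, ← coe_eq_univ, coe_image, coe_univ, Set.image_univ,
      Set.range_eq_univ]
  rw [← Fintype.card_perm, ← card_univ, ← sum_const]
  have hmem {f} (hf : f ∈ ({f | univ.image f = univ} : Finset (α → α))) : f.Bijective :=
    (hbij f).1 (mem_filter.1 hf).2
  exact sum_bij' (fun f hf => Equiv.ofBijective f (hmem hf)) (fun σ _ => σ) (by simp)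
    (by simp [hbij]) (by simp) (by simp) (fun f hf => Equiv.prod_comp (.ofBijective f (hmem hf)) v)

theorem sum_neg_one_pow_card_compl_smul_sum_pow {ι A : Type*} [Fintype ι] [DecidableEq ι]
    [CommRing A] (v : ι → A) :
    ∑ S : Finset ι, (-1 : ℤ) ^ #Sᶜ • (∑ k ∈ S, v k) ^ Fintype.card ι
      = (Fintype.card ι).factorial • ∏ k, v k := by
  have hpow (S : Finset ι) :
      (∑ k ∈ S, v k) ^ Fintype.card ι
        = ∑ f ∈ Fintype.piFinset fun _ : ι => S, ∏ i, v (f i) := by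
    rw [sum_prod_piFinset, prod_const, card_univ]
  simp_rw [hpow, smul_sum]
  rw [sum_comm' (t' := univ) (s' := fun f => {S | univ.image f ⊆ S})]
  · simp_rw [← sum_smul, sum_superset_neg_one_pow_card_compl, ite_smul, one_smul, zero_smul,
      ← sum_filter]
    exact sum_surjective_prod_comp v
  · intro S f
    simp [image_subset_iff]

theorem prod_mem_span_pow {K A ι : Type*} [Field K] [CharZero K] [CommRing A] [Algebra K A]
    [Fintype ι] {V : Submodule K A} {v : ι → A} (hv : ∀ k, v k ∈ V) :
    ∏ k, v k ∈ Submodule.span K {q | ∃ L ∈ V, ∃ n : ℕ, L ^ n = q} := by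
  classical
  have hfac : ((Fintype.card ι).factorial : K) ≠ 0 :=
    Nat.cast_ne_zero.2 (Nat.factorial_ne_zero _)
  rw [← one_smul K (∏ k, v k), ← inv_mul_cancel₀ hfac, mul_smul, Nat.cast_smul_eq_nsmul,
    ← sum_neg_one_pow_card_compl_smul_sum_pow]
  refine Submodule.smul_mem _ _ (Submodule.sum_mem _ fun S _ => Submodule.smul_of_tower_mem _ _ ?_)
  exact Submodule.subset_span ⟨_, V.sum_mem fun k _ => hv k, _, rfl⟩

theorem MvPolynomial.span_pow_isHomogeneous_one_eq_top {σ K : Type*} [Field K] [CharZero K] :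
    Submodule.span K {q | ∃ L ∈ homogeneousSubmodule σ K 1, ∃ n : ℕ, L ^ n = q} = ⊤ := by
  refine Submodule.eq_top_iff'.2 fun p => ?_
  induction p using MvPolynomial.induction_on' with
  | monomial s a =>
    rw [monomial_eq, ← smul_eq_C_mul, Finsupp.prod, ← prod_coe_sort]
    refine Submodule.smul_mem _ _ ?_
    have hX (x : (i : s.support) × Fin (s i)) : X (x.1 : σ) ∈ homogeneousSubmodule σ K 1 :=
      (mem_homogeneousSubmodule _ _).2 (isHomogeneous_X K _)
    simpa [Fintype.prod_sigma] using prod_mem_span_pow hX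
  | add p q hp hq => exact Submodule.add_mem _ hp hq

section Cocycle

variable {R A : Type*} [CommSemiring R] [CommRing A] [Module R A]

def IsHochschildCocycle (D : A →ₗ[R] A →ₗ[R] A) : Prop :=
  ∀ p q r, D (p * q) r + D p q * r = D p (q * r) + p * D q r

theorem IsHochschildCocycle.apply_one_right {D : A →ₗ[R] A →ₗ[R] A}
    (hD : IsHochschildCocycle D) (h11 : D 1 1 = 0) (p : A) : D p 1 = 0 := by
  simpa [h11] using hD p 1 1

def FormallyAssociative (P : ℕ → A →ₗ[R] A →ₗ[R] A) : Prop :=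
  ∀ n p q r,
    ∑ j ∈ range (n + 1), P j (P (n - j) p q) r = ∑ j ∈ range (n + 1), P j p (P (n - j) q r)

theorem FormallyAssociative.isHochschildCocycle_sub {P Q : ℕ → A →ₗ[R] A →ₗ[R] A} {M : ℕ}
    (hP : FormallyAssociative P) (hQ : FormallyAssociative Q) (hP0 : ∀ p q, P 0 p q = p * q)
    (hPQ : ∀ j ≤ M, P j = Q j) : IsHochschildCocycle (P (M + 1) - Q (M + 1)) := by
  intro p q r
  have hQ0 : ∀ p q, Q 0 p q = p * q := by simpa [hPQ 0 (Nat.zero_le M)] using hP0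
  have hP := hP (M + 1) p q r
  have hQ := hQ (M + 1) p q r
  simp only [sum_range_succ' _ (M + 1), sum_range_succ _ M, Nat.sub_self, Nat.sub_zero,
    Nat.succ_sub_succ, hP0, hQ0] at hP hQ
  have hmid {j} (hj : j ∈ range M) : P (j + 1) = Q (j + 1) ∧ P (M - j) = Q (M - j) :=
    ⟨hPQ _ (by simp at hj; omega), hPQ _ (by omega)⟩
  have hleft : ∑ j ∈ range M, P (j + 1) (P (M - j) p q) r
      = ∑ j ∈ range M, Q (j + 1) (Q (M - j) p q) r :=
    sum_congr rfl fun j hj => by rw [(hmid hj).1, (hmid hj).2]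
  have hright : ∑ j ∈ range M, P (j + 1) p (P (M - j) q r)
      = ∑ j ∈ range M, Q (j + 1) p (Q (M - j) q r) :=
    sum_congr rfl fun j hj => by rw [(hmid hj).1, (hmid hj).2]
  rw [hleft, hright] at hP
  simp only [LinearMap.sub_apply]
  linear_combination hP - hQ

end Cocycle

theorem MvPolynomial.hochschildCocycle_eq_zero_of_apply_X {σ R : Type*} [CommRing R]
    {D : MvPolynomial σ R →ₗ[R] MvPolynomial σ R →ₗ[R] MvPolynomial σ R}
    (hD : IsHochschildCocycle D) (h11 : D 1 1 = 0) (hX : ∀ p i, D p (X i) = 0) : D = 0 := by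
  refine LinearMap.ext fun p => LinearMap.ext fun q => ?_
  induction q using MvPolynomial.induction_on generalizing p with
  | C a =>
    rw [← mul_one (C a), ← smul_eq_C_mul, map_smul, hD.apply_one_right h11, smul_zero]
    rfl
  | add q r hq hr => simp [hq, hr]
  | mul_X q i hq => simpa [hq, hX] using (hD p q (X i)).symm

/-- A formal bi-differential star product `⋆ = ∑ εʲ Π_j` on polynomials over `g* ≅ ℝ^d`
satisfying (i) `p ⋆ q = pq +` terms of degree `≤ n+m-1` for homogeneous `p, q` of degrees
`n, m`, and (ii) associativity, is uniquely determined by the values `(X)^n ⋆ Y` for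
linear `X, Y` and `n ∈ ℕ`. -/
theorem star_product_determined_by_pow_star_linear {d : ℕ}
    (Pi1 Pi2 : ℕ → MvPolynomial (Fin d) ℝ →ₗ[ℝ] MvPolynomial (Fin d) ℝ →ₗ[ℝ]
      MvPolynomial (Fin d) ℝ)
    (h10 : ∀ p q, Pi1 0 p q = p * q)
    (h20 : ∀ p q, Pi2 0 p q = p * q)
    (h1deg : ∀ j, 1 ≤ j → ∀ (a b : ℕ) (p q : MvPolynomial (Fin d) ℝ),
      p.IsHomogeneous a → q.IsHomogeneous b →
      Pi1 j p q = 0 ∨ (Pi1 j p q).totalDegree < a + b)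
    (h2deg : ∀ j, 1 ≤ j → ∀ (a b : ℕ) (p q : MvPolynomial (Fin d) ℝ),
      p.IsHomogeneous a → q.IsHomogeneous b →
      Pi2 j p q = 0 ∨ (Pi2 j p q).totalDegree < a + b)
    (h1assoc : ∀ (n : ℕ) (p q r : MvPolynomial (Fin d) ℝ),
      ∑ j ∈ Finset.range (n + 1), Pi1 j (Pi1 (n - j) p q) r
        = ∑ j ∈ Finset.range (n + 1), Pi1 j p (Pi1 (n - j) q r))
    (h2assoc : ∀ (n : ℕ) (p q r : MvPolynomial (Fin d) ℝ),
      ∑ j ∈ Finset.range (n + 1), Pi2 j (Pi2 (n - j) p q) r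
        = ∑ j ∈ Finset.range (n + 1), Pi2 j p (Pi2 (n - j) q r))
    (hagree : ∀ X Y : MvPolynomial (Fin d) ℝ, X.IsHomogeneous 1 → Y.IsHomogeneous 1 →
      ∀ (n j : ℕ), Pi1 j (X ^ n) Y = Pi2 j (X ^ n) Y) :
    Pi1 = Pi2 := by
  funext N
  induction N using Nat.strong_induction_on with | _ N IH
  rcases N with _ | M
  · exact LinearMap.ext₂ fun p q => by rw [h10, h20]
  have hcocycle : IsHochschildCocycle (Pi1 (M + 1) - Pi2 (M + 1)) :=
    FormallyAssociative.isHochschildCocycle_sub h1assoc h2assoc h10 fun j hj => IH j (by omega)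
  have h11 : (Pi1 (M + 1) - Pi2 (M + 1)) 1 1 = 0 := by
    have hone := isHomogeneous_one (Fin d) ℝ
    rw [LinearMap.sub_apply, LinearMap.sub_apply,
      (h1deg _ M.succ_pos 0 0 1 1 hone hone).resolve_right (Nat.not_lt_zero _),
      (h2deg _ M.succ_pos 0 0 1 1 hone hone).resolve_right (Nat.not_lt_zero _), sub_zero]
  have hX : ∀ p i, (Pi1 (M + 1) - Pi2 (M + 1)) p (X i) = 0 := by
    intro p i
    have hflip : (Pi1 (M + 1) - Pi2 (M + 1)).flip (X i) = 0 :=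
      LinearMap.ext_on span_pow_isHomogeneous_one_eq_top fun _ ⟨L, hL, n, hLn⟩ => by
        simp [← hLn, hagree L (X i) hL (isHomogeneous_X ℝ i) n (M + 1)]
    exact LinearMap.congr_fun hflip p
  exact sub_eq_zero.1 (hochschildCocycle_eq_zero_of_apply_X hcocycle h11 hX)
end
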